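/- Upper bound on the size of a D-cover: Let 𝒳, 𝒲 be finite alphabets, d_L : 𝒳×𝒲 → [0,∞) a distortion measure, Dc ≥ 0, n ≥ 1, Q ∈ 𝒫_n(𝒳), and C ⊆ 𝒲^n. Then |𝔇(C,Q,Dc)| ≤ |C| · (n+1)^{|𝒳||𝒲|} · 2^{n h*}, where h* = sup{ H_Q(X|W) : Q_{XW} a joint distribution on 𝒳×𝒲 with 𝒳-marginal Q and E_{Q_{XW}}[d_L(X,W)] ≤ Dc } (with h* = 0, and 𝔇(C,Q,Dc) empty, if no such joint distribution exists). -/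

import Mathlib

open scoped BigOperators

noncomputable section

/-- Average per-letter distortion between sequences. -/
def seqDist {A B : Type*} (d : A → B → ℝ) {n : ℕ} (x : Fin n → A) (z : Fin n → B) : ℝ :=
  (n : ℝ)⁻¹ * ∑ i, d (x i) (z i)

/-- Empirical distribution (type) of a sequence. -/
def empDist {A : Type*} [Fintype A] [DecidableEq A] {n : ℕ} (x : Fin n → A) : A → ℝ :=
  fun a => ((Finset.univ.filter fun i => x i = a).card : ℝ) / n

/-- Type class of `Q` among length-`n` sequences. -/
def typeClass (A : Type*) [Fintype A] [DecidableEq A] (n : ℕ) (Q : A → ℝ) :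
    Set (Fin n → A) := {x | empDist x = Q}

/-- The D-cover of a set of reproductions `C`. -/
def Dcover {A W : Type*} [Fintype A] [DecidableEq A] (dL : A → W → ℝ) {n : ℕ}
    (C : Set (Fin n → W)) (Q : A → ℝ) (Dc : ℝ) : Set (Fin n → A) :=
  {x | x ∈ typeClass A n Q ∧ ∃ w ∈ C, seqDist dL x w ≤ Dc}

/-- `p` is a probability distribution on a finite alphabet. -/
def IsDist {A : Type*} [Fintype A] (p : A → ℝ) : Prop :=
  (∀ a, 0 ≤ p a) ∧ ∑ a, p a = 1

/-- Conditional entropy `H(X|W)` (base 2) of a joint distribution on `A × W`. -/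
def condEnt {A W : Type*} [Fintype A] [Fintype W] (q : A × W → ℝ) : ℝ :=
  -∑ p : A × W, q p * Real.logb 2 (q p / (∑ a, q (a, p.2)))

/-- The feasible set of joint distributions with `𝒳`-marginal `Q` and expected legitimate
distortion at most `Dc`. -/
def feasibleL {A W : Type*} [Fintype A] [Fintype W] (dL : A → W → ℝ) (Q : A → ℝ)
    (Dc : ℝ) : Set (A × W → ℝ) :=
  {q | IsDist q ∧ (∀ a, ∑ w, q (a, w) = Q a) ∧ (∑ p : A × W, q p * dL p.1 p.2) ≤ Dc}

/-! Each `x` in the D-cover has some `w ∈ C` within distortion `Dc`, and then `N = jointCount x w`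
is a joint count with `N / n` feasible, so `x` lies in the conditional type class
`{x' | jointCount x' w = N}`. There are at most `|C| (n+1)^{|𝒳||𝒲|}` such pairs `(w, N)`.
A conditional type class has at most `2^{n H(X|W)}` elements: under the product law
`∏ i, V(· | w i)`, with `V = condProb N` the conditional empirical law, every element of the class
has mass exactly `2^{-n H(X|W)}`. Finally `H(X|W) ≤ h*` because `N / n` is feasible. -/

namespace MethodOfTypes

open Finset Real

section JointCount

variable {𝓧 𝓦 : Type*} [DecidableEq 𝓧] [DecidableEq 𝓦] {n : ℕ}

def jointCount (x : Fin n → 𝓧) (w : Fin n → 𝓦) (p : 𝓧 × 𝓦) : ℕ :=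
  #{i | (x i, w i) = p}

lemma jointCount_le (x : Fin n → 𝓧) (w : Fin n → 𝓦) (p : 𝓧 × 𝓦) : jointCount x w p ≤ n :=
  (card_filter_le _ _).trans_eq (card_fin n)

variable [Fintype 𝓧] [Fintype 𝓦]

lemma sum_jointCount_mul (x : Fin n → 𝓧) (w : Fin n → 𝓦) (f : 𝓧 × 𝓦 → ℝ) :
    ∑ p, (jointCount x w p : ℝ) * f p = ∑ i, f (x i, w i) := by
  rw [← sum_fiberwise' univ (fun i => (x i, w i)) f]
  simp only [sum_const, nsmul_eq_mul, jointCount]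

lemma prod_pow_jointCount (x : Fin n → 𝓧) (w : Fin n → 𝓦) (f : 𝓧 × 𝓦 → ℝ) :
    ∏ p, f p ^ jointCount x w p = ∏ i, f (x i, w i) := by
  rw [← prod_fiberwise' univ (fun i => (x i, w i)) f]
  simp only [prod_const, jointCount]

omit [Fintype 𝓧] in
lemma sum_jointCount_left (x : Fin n → 𝓧) (w : Fin n → 𝓦) (a : 𝓧) :
    ∑ b, jointCount x w (a, b) = #{i | x i = a} := by
  rw [card_eq_sum_card_fiberwise (f := w) (t := univ) fun i _ => mem_univ _]
  refine sum_congr rfl fun b _ => ?_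
  simp only [jointCount, filter_filter, Prod.ext_iff]

end JointCount

section CondTypeClass

variable {𝓧 𝓦 : Type*} [Fintype 𝓧] {n : ℕ}

def condProb (N : 𝓧 × 𝓦 → ℕ) (p : 𝓧 × 𝓦) : ℝ :=
  N p / ∑ a, (N (a, p.2) : ℝ)

lemma condProb_nonneg (N : 𝓧 × 𝓦 → ℕ) (p : 𝓧 × 𝓦) : 0 ≤ condProb N p := by
  unfold condProb; positivity

lemma condProb_pos {N : 𝓧 × 𝓦 → ℕ} {p : 𝓧 × 𝓦} (hp : 0 < N p) : 0 < condProb N p := by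
  have hNp : (0 : ℝ) < N p := by exact_mod_cast hp
  exact div_pos hNp <| hNp.trans_le <|
    single_le_sum (f := fun a => (N (a, p.2) : ℝ)) (fun _ _ => by positivity) (mem_univ p.1)

lemma sum_condProb_le_one (N : 𝓧 × 𝓦 → ℕ) (b : 𝓦) : ∑ a, condProb N (a, b) ≤ 1 := by
  simp only [condProb, ← sum_div]
  exact div_self_le_one _

variable [Fintype 𝓦]

lemma mul_condEnt_div_eq (N : 𝓧 × 𝓦 → ℕ) (hn : n ≠ 0) :
    (n : ℝ) * condEnt (fun p => (N p : ℝ) / n) = -∑ p, N p * logb 2 (condProb N p) := by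
  have hn' : (n : ℝ) ≠ 0 := by exact_mod_cast hn
  simp only [condEnt, condProb, ← sum_div, div_div_div_cancel_right₀ hn', mul_neg, mul_sum]
  congr 2 with p
  field_simp

lemma prod_condProb_pow_jointCount (N : 𝓧 × 𝓦 → ℕ) :
    ∏ p, condProb N p ^ N p = (2 : ℝ) ^ ∑ p, N p * logb 2 (condProb N p) := by
  rw [rpow_sum_of_pos two_pos]
  refine prod_congr rfl fun p _ => ?_
  rcases (N p).eq_zero_or_pos with hp | hp
  · simp [hp]
  · rw [mul_comm, rpow_mul zero_le_two, rpow_logb two_pos (by norm_num) (condProb_pos hp),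
      rpow_natCast]

variable [DecidableEq 𝓧] [DecidableEq 𝓦]

def condTypeClass (w : Fin n → 𝓦) (N : 𝓧 × 𝓦 → ℕ) : Finset (Fin n → 𝓧) :=
  {x | jointCount x w = N}

@[simp]
lemma mem_condTypeClass {w : Fin n → 𝓦} {N : 𝓧 × 𝓦 → ℕ} {x : Fin n → 𝓧} :
    x ∈ condTypeClass w N ↔ jointCount x w = N := by
  simp [condTypeClass]

lemma card_condTypeClass_le (hn : n ≠ 0) (w : Fin n → 𝓦) (N : 𝓧 × 𝓦 → ℕ) :
    (#(condTypeClass w N) : ℝ) ≤ 2 ^ ((n : ℝ) * condEnt (fun p => (N p : ℝ) / n)) := by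
  set c := ∏ p, condProb N p ^ N p
  have hc : 0 < c := prod_pos fun p _ => by
    rcases (N p).eq_zero_or_pos with hp | hp
    · simp [hp]
    · exact pow_pos (condProb_pos hp) _
  have hmass : ∀ x ∈ condTypeClass w N, c ≤ ∏ i, condProb N (x i, w i) := fun x hx => by
    rw [← prod_pow_jointCount, mem_condTypeClass.mp hx]
  have htotal : ∑ x : Fin n → 𝓧, ∏ i, condProb N (x i, w i) ≤ 1 := by
    rw [← Fintype.prod_sum fun i a => condProb N (a, w i)]
    exact prod_le_one (fun i _ => sum_nonneg fun _ _ => condProb_nonneg _ _)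
      fun i _ => sum_condProb_le_one N (w i)
  have hcard : #(condTypeClass w N) * c ≤ 1 := calc
    #(condTypeClass w N) * c = #(condTypeClass w N) • c := (nsmul_eq_mul _ _).symm
    _ ≤ ∑ x ∈ condTypeClass w N, ∏ i, condProb N (x i, w i) := card_nsmul_le_sum _ _ _ hmass
    _ ≤ ∑ x : Fin n → 𝓧, ∏ i, condProb N (x i, w i) :=
      sum_le_univ_sum_of_nonneg fun x => prod_nonneg fun i _ => condProb_nonneg _ _
    _ ≤ 1 := htotal
  rw [mul_condEnt_div_eq N hn, rpow_neg zero_le_two, ← prod_condProb_pow_jointCount, ← one_div,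
    le_div_iff₀ hc]
  exact hcard

end CondTypeClass

section EntropyBound

variable {𝓧 𝓦 : Type*} [Fintype 𝓧] [Fintype 𝓦]

lemma neg_mul_logb_div_le {t s : ℝ} (ht : 0 ≤ t) (hts : t ≤ s) :
    -(t * logb 2 (t / s)) ≤ s / log 2 := by
  have hlog2 : 0 < log 2 := log_pos one_lt_two
  rcases ht.eq_or_lt with rfl | ht
  · simpa using div_nonneg hts hlog2.le
  have hs : 0 < s := ht.trans_le hts
  have hlog : 1 - s / t ≤ log (t / s) := by
    simpa only [inv_div] using one_sub_inv_le_log_of_pos (div_pos ht hs)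
  rw [logb, ← mul_div_assoc, neg_div', div_le_div_iff_of_pos_right hlog2]
  have : t * (1 - s / t) = t - s := by field_simp
  nlinarith [mul_le_mul_of_nonneg_left hlog ht.le]

lemma condEnt_le {q : 𝓧 × 𝓦 → ℝ} (hq : IsDist q) : condEnt q ≤ Fintype.card 𝓧 / log 2 := by
  have hmarg : ∑ b, ∑ a, q (a, b) = 1 := by rw [← Fintype.sum_prod_type_right]; exact hq.2
  calc condEnt q = ∑ p : 𝓧 × 𝓦, -(q p * logb 2 (q p / ∑ a, q (a, p.2))) := by
        rw [condEnt, sum_neg_distrib]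
    _ ≤ ∑ p : 𝓧 × 𝓦, (∑ a, q (a, p.2)) / log 2 := sum_le_sum fun p _ =>
        neg_mul_logb_div_le (hq.1 p)
          (single_le_sum (f := fun a => q (a, p.2)) (fun a _ => hq.1 _) (mem_univ p.1))
    _ = Fintype.card 𝓧 / log 2 := by
        rw [← sum_div, Fintype.sum_prod_type]
        simp only [sum_const, card_univ, nsmul_eq_mul, hmarg, mul_one]

lemma bddAbove_condEnt_feasibleL (dL : 𝓧 → 𝓦 → ℝ) (Q : 𝓧 → ℝ) (Dc : ℝ) :
    BddAbove {h : ℝ | ∃ q ∈ feasibleL dL Q Dc, h = condEnt q} := by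
  refine ⟨Fintype.card 𝓧 / log 2, ?_⟩
  rintro h ⟨q, hq, rfl⟩
  exact condEnt_le hq.1

end EntropyBound

section Feasibility

variable {𝓧 𝓦 : Type*} [Fintype 𝓧] [DecidableEq 𝓧] [Fintype 𝓦] [DecidableEq 𝓦] {n : ℕ}

lemma jointCount_div_mem_feasibleL {dL : 𝓧 → 𝓦 → ℝ} {Q : 𝓧 → ℝ} {Dc : ℝ} (hn : n ≠ 0)
    {x : Fin n → 𝓧} {w : Fin n → 𝓦} (hx : empDist x = Q) (hd : seqDist dL x w ≤ Dc) :
    (fun p => (jointCount x w p : ℝ) / n) ∈ feasibleL dL Q Dc := by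
  have hn' : (n : ℝ) ≠ 0 := by exact_mod_cast hn
  refine ⟨⟨fun p => by positivity, ?_⟩, fun a => ?_, ?_⟩
  · rw [← sum_div, div_eq_one_iff_eq hn']
    simpa using sum_jointCount_mul x w fun _ => 1
  · rw [← sum_div, ← hx, empDist, ← sum_jointCount_left x w a]
    push_cast; rfl
  · simpa only [div_mul_eq_mul_div, ← sum_div, sum_jointCount_mul, seqDist, inv_mul_eq_div]
      using hd

variable (n) (dL : 𝓧 → 𝓦 → ℝ) (Q : 𝓧 → ℝ) (Dc : ℝ)

open Classical in
def feasibleJointCounts : Finset (𝓧 × 𝓦 → ℕ) :=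
  {N ∈ Fintype.piFinset fun _ => range (n + 1) |
    (fun p => (N p : ℝ) / n) ∈ feasibleL dL Q Dc}

lemma mem_feasibleJointCounts {N : 𝓧 × 𝓦 → ℕ} :
    N ∈ feasibleJointCounts n dL Q Dc ↔
      (∀ p, N p ≤ n) ∧ (fun p => (N p : ℝ) / n) ∈ feasibleL dL Q Dc := by
  classical
  simp [feasibleJointCounts]

lemma card_condTypeClass_le_of_mem_feasibleJointCounts {N : 𝓧 × 𝓦 → ℕ}
    (hN : N ∈ feasibleJointCounts n dL Q Dc) (hn : n ≠ 0) (w : Fin n → 𝓦) :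
    (#(condTypeClass w N) : ℝ) ≤
      2 ^ ((n : ℝ) * sSup {h : ℝ | ∃ q ∈ feasibleL dL Q Dc, h = condEnt q}) := by
  have hent : condEnt (fun p => (N p : ℝ) / n) ≤
      sSup {h : ℝ | ∃ q ∈ feasibleL dL Q Dc, h = condEnt q} :=
    le_csSup (bddAbove_condEnt_feasibleL dL Q Dc)
      ⟨_, ((mem_feasibleJointCounts n dL Q Dc).mp hN).2, rfl⟩
  exact (card_condTypeClass_le hn w N).trans <|
    rpow_le_rpow_of_exponent_le one_le_two (mul_le_mul_of_nonneg_left hent (Nat.cast_nonneg n))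

lemma card_feasibleJointCounts_le :
    #(feasibleJointCounts n dL Q Dc) ≤ (n + 1) ^ (Fintype.card 𝓧 * Fintype.card 𝓦) := by
  classical
  refine (card_filter_le _ _).trans_eq ?_
  simp [Fintype.card_prod]

lemma Dcover_subset_biUnion_condTypeClass (hn : n ≠ 0) (C : Finset (Fin n → 𝓦)) :
    Dcover dL (C : Set (Fin n → 𝓦)) Q Dc ⊆
      (C.biUnion fun w => (feasibleJointCounts n dL Q Dc).biUnion (condTypeClass w) :
        Set (Fin n → 𝓧)) := by
  rintro x ⟨hx, w, hwC, hd⟩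
  simp only [coe_biUnion, Set.mem_iUnion, mem_coe]
  refine ⟨w, hwC, jointCount x w, ?_, mem_condTypeClass.mpr rfl⟩
  exact (mem_feasibleJointCounts n dL Q Dc).mpr
    ⟨jointCount_le x w, jointCount_div_mem_feasibleL hn hx hd⟩

end Feasibility

end MethodOfTypes

open MethodOfTypes Finset in
theorem dcover_size_bound_general
    {𝓧 𝓦 : Type*} [Fintype 𝓧] [DecidableEq 𝓧] [Fintype 𝓦]
    (dL : 𝓧 → 𝓦 → ℝ) (Dc : ℝ) {n : ℕ} (hn : 1 ≤ n)
    (Q : 𝓧 → ℝ) (C : Set (Fin n → 𝓦)) :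
    ((Dcover dL C Q Dc).ncard : ℝ)
        ≤ (C.ncard : ℝ) * ((n : ℝ) + 1) ^ (Fintype.card 𝓧 * Fintype.card 𝓦)
            * (2 : ℝ) ^ ((n : ℝ) * sSup {h : ℝ | ∃ q ∈ feasibleL dL Q Dc, h = condEnt q}) ∧
      (feasibleL dL Q Dc = ∅ → Dcover dL C Q Dc = ∅) := by
  classical
  have hn : n ≠ 0 := Nat.one_le_iff_ne_zero.mp hn
  refine ⟨?_, fun hF => Set.eq_empty_of_forall_notMem fun x ⟨hx, w, _, hd⟩ =>
    hF.subset (jointCount_div_mem_feasibleL hn hx hd)⟩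
  lift C to Finset (Fin n → 𝓦) using C.toFinite
  set F := feasibleJointCounts n dL Q Dc
  set hstar := sSup {h : ℝ | ∃ q ∈ feasibleL dL Q Dc, h = condEnt q}
  have hcover := Set.ncard_le_ncard (Dcover_subset_biUnion_condTypeClass n dL Q Dc hn C)
  rw [Set.ncard_coe_finset] at hcover
  calc ((Dcover dL (C : Set (Fin n → 𝓦)) Q Dc).ncard : ℝ)
      ≤ ∑ w ∈ C, ∑ N ∈ F, (#(condTypeClass w N) : ℝ) := by
        exact_mod_cast hcover.trans <| card_biUnion_le.trans <|
          sum_le_sum fun w _ => card_biUnion_le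
    _ ≤ ∑ w ∈ C, ∑ N ∈ F, (2 : ℝ) ^ ((n : ℝ) * hstar) :=
        sum_le_sum fun w _ => sum_le_sum fun N hN =>
          card_condTypeClass_le_of_mem_feasibleJointCounts n dL Q Dc hN hn w
    _ ≤ _ := by
        simp only [sum_const, nsmul_eq_mul, Set.ncard_coe_finset, ← mul_assoc]
        gcongr
        exact_mod_cast card_feasibleJointCounts_le n dL Q Dc

/-- **Upper bound on the size of a D-cover.**
`|𝔇(C,Q,Dc)| ≤ |C| · (n+1)^{|𝒳||𝒲|} · 2^{n·h*}` where `h*` is the supremum of `H_Q(X|W)`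
over joint distributions with `𝒳`-marginal `Q` and `E[d_L] ≤ Dc` (with `h* = 0`, and the
D-cover empty, when no such joint distribution exists). -/
theorem dcover_size_bound
    {𝓧 𝓦 : Type*} [Fintype 𝓧] [DecidableEq 𝓧] [Fintype 𝓦]
    (dL : 𝓧 → 𝓦 → ℝ) (Dc : ℝ) (hDc : 0 ≤ Dc) {n : ℕ} (hn : 1 ≤ n)
    (Q : 𝓧 → ℝ) (hQ : ∃ x : Fin n → 𝓧, empDist x = Q) (C : Set (Fin n → 𝓦)) :
    ((Dcover dL C Q Dc).ncard : ℝ)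
        ≤ (C.ncard : ℝ) * ((n : ℝ) + 1) ^ (Fintype.card 𝓧 * Fintype.card 𝓦)
            * (2 : ℝ) ^ ((n : ℝ) * sSup {h : ℝ | ∃ q ∈ feasibleL dL Q Dc, h = condEnt q}) ∧
      (feasibleL dL Q Dc = ∅ → Dcover dL C Q Dc = ∅) :=
  dcover_size_bound_general dL Dc hn Q C

end
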